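/- arXiv:math/0612569 — 2 statements merged into one kernel-verified Lean document; each statement's English description precedes it below -/
import Mathlib

section
/- Let R be a ring such that every finitely presented R-module has finite projective (homological) dimension. Then R is regular in the sense of Vogel. -/
universe u

open CategoryTheory CategoryTheory.Limits

/-- A class of `R`-modules is stable under filtered colimits if, for every
filtered diagram of modules all of whose objects belong to the class, the
colimit (i.e. the point of any colimit cocone) again belongs to the class. -/
def StableUnderFilteredColimits (R : Type u) [Ring R] (S : Set (ModuleCat.{u} R)) : Prop :=
  ∀ (J : Type u) (_ : SmallCategory J) (_ : IsFiltered J)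
    (F : J ⥤ ModuleCat.{u} R) (c : Cocone F), IsColimit c →
    (∀ j : J, F.obj j ∈ S) → c.pt ∈ S

/-- The 2/3 axiom: for every short exact sequence `0 → M → N → P → 0`, if two of the
three modules belong to the class, then so does the third. -/
def SatisfiesTwoOfThree (R : Type u) [Ring R] (S : Set (ModuleCat.{u} R)) : Prop :=
  ∀ (M N P : ModuleCat.{u} R) (f : M →ₗ[R] N) (g : N →ₗ[R] P),
    Function.Injective f → Function.Surjective g → Function.Exact f g →
      ((M ∈ S → N ∈ S → P ∈ S) ∧ (M ∈ S → P ∈ S → N ∈ S) ∧ (N ∈ S → P ∈ S → M ∈ S))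

/-- A class of `R`-modules is exact if it is stable under filtered colimits and
satisfies the 2/3 axiom. -/
def IsExactClass (R : Type u) [Ring R] (S : Set (ModuleCat.{u} R)) : Prop :=
  StableUnderFilteredColimits R S ∧ SatisfiesTwoOfThree R S

/-- An `R`-module is regular (in the sense of Vogel) if it belongs to every exact class
containing the module `R` itself (i.e. to the smallest such class). -/
def IsRegularModule (R : Type u) [Ring R] (M : ModuleCat.{u} R) : Prop :=
  ∀ S : Set (ModuleCat.{u} R), IsExactClass R S → ModuleCat.of R R ∈ S → M ∈ S

/-- A ring `R` is regular in the sense of Vogel if every `R`-module is regular,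
i.e. every exact class of `R`-modules containing `R` contains all `R`-modules. -/
def IsVogelRegular (R : Type u) [Ring R] : Prop :=
  ∀ M : ModuleCat.{u} R, IsRegularModule R M

/-- A ring is right regular (in the sense of Vogel) if the opposite ring is regular for
left modules, i.e. the category of right `R`-modules (= left `Rᵐᵒᵖ`-modules) has the
Vogel regularity property. -/
def IsVogelRightRegular (R : Type u) [Ring R] : Prop := IsVogelRegular Rᵐᵒᵖ

/-- A module is flat iff it is a filtered colimit of finitely generated free modules
(Lazard's theorem); we take this characterization as the definition of flatness,
which makes sense over an arbitrary (possibly non-commutative) ring. -/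
def IsLazardFlat (R : Type u) [Ring R] (M : Type u) [AddCommGroup M] [Module R M] : Prop :=
  ∃ (J : Type u) (_ : SmallCategory J) (_ : IsFiltered J)
    (F : J ⥤ ModuleCat.{u} R) (c : Cocone F) (_ : IsColimit c),
    (∀ j : J, ∃ n : ℕ, Nonempty ((F.obj j) ≃ₗ[R] (Fin n → R))) ∧
    Nonempty (c.pt ≃ₗ[R] M)

/-- A module has a finite projective resolution (i.e. finite projective/homological
dimension) if it admits a projective resolution whose terms eventually vanish. -/
def HasFiniteProjectiveResolution (R : Type u) [Ring R] (M : ModuleCat.{u} R) : Prop :=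
  ∃ P : ProjectiveResolution M, ∃ n : ℕ, ∀ i : ℕ, n ≤ i → Subsingleton (P.complex.X i)

/-!
Let `S` be an exact class containing `R`. By the 2/3 axiom `S` contains the modules `Rⁿ`,
hence, as filtered unions, all free modules; a retract of a free module is a filtered colimit of
free modules, so `S` contains all projectives. Climbing down a finite projective resolution with
the 2/3 axiom puts every finitely presented module in `S`. If `M = Rⁿ / K` is finitely generated,
every finitely generated `L ≤ K` lies in `S` because `Rⁿ / L` is finitely presented, so `K`, the
filtered union of these `L`, lies in `S`, and then so does `M`. Finally every module is the
filtered union of its finitely generated submodules.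
-/

namespace ModuleCat.FilteredColimits

variable {R : Type u} [Ring R] {J : Type u} [SmallCategory J] [IsFiltered J]
  {F : J ⥤ ModuleCat.{u} R}

noncomputable def isColimitOf (c : Cocone F)
    (hsurj : ∀ x : c.pt, ∃ j y, c.ι.app j y = x)
    (hker : ∀ j y, c.ι.app j y = 0 → ∃ (k : J) (f : j ⟶ k), F.map f y = 0) :
    IsColimit c :=
  isColimitOfReflects (forget _) <| Types.FilteredColimit.isColimitOf' _ _
    (fun x => by
      obtain ⟨j, y, rfl⟩ := hsurj x
      exact ⟨j, y, rfl⟩)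
    (fun j x y hxy => by
      obtain ⟨k, f, hf⟩ := hker j (x - y) (by simpa [sub_eq_zero] using hxy)
      exact ⟨k, f, by simpa [sub_eq_zero] using hf⟩)

end ModuleCat.FilteredColimits

namespace Submodule

variable {R : Type u} [Ring R] {M : Type u} [AddCommGroup M] [Module R M]
  {J : Type u} [Preorder J] (N : J →o Submodule R M)

def directedDiagram : J ⥤ ModuleCat.{u} R where
  obj j := ModuleCat.of R (N j)
  map f := ModuleCat.ofHom (inclusion (N.monotone (leOfHom f)))

def directedCocone : Cocone (directedDiagram N) where
  pt := ModuleCat.of R M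
  ι := { app := fun j => ModuleCat.ofHom (N j).subtype }

noncomputable def isColimitDirectedCocone [IsDirectedOrder J] [Nonempty J]
    (hN : ∀ x, ∃ j, x ∈ N j) : IsColimit (directedCocone N) :=
  ModuleCat.FilteredColimits.isColimitOf _
    (fun x => (hN x).imp fun _ hj => ⟨⟨x, hj⟩, rfl⟩)
    (fun j y hy => ⟨j, 𝟙 j, by rw [show y = 0 from Subtype.ext hy, map_zero]⟩)

end Submodule

/-- A retract `P` of `F` is the colimit of the telescope `F → F → ⋯` along the idempotent
`r ≫ i`. -/
lemma StableUnderFilteredColimits.mem_of_retract {R : Type u} [Ring R]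
    {S : Set (ModuleCat.{u} R)} (hS : StableUnderFilteredColimits R S)
    {P F : ModuleCat.{u} R} (h : Retract P F) (hF : F ∈ S) : P ∈ S := by
  let telescope : ℕ ⥤ ModuleCat.{u} R := Functor.ofSequence (X := fun _ => F) fun _ => h.r ≫ h.i
  let c : Cocone telescope := ⟨P, NatTrans.ofSequence (fun _ => h.r) (fun _ => by
    simp only [telescope, Functor.ofSequence_map_homOfLE_succ, Functor.const_obj_map]
    exact (Category.assoc _ _ _).trans (h.r ≫= h.retract))⟩
  refine hS (AsSmall.{u} ℕ) inferInstance inferInstance _ (c.whisker AsSmall.down)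
    (ModuleCat.FilteredColimits.isColimitOf _ (fun x => ⟨AsSmall.up.obj 0, h.i x, ?_⟩) ?_)
    (fun _ => hF)
  · exact ConcreteCategory.congr_hom h.retract x
  · intro j y hy
    let step := AsSmall.up.map (homOfLE (Nat.le_succ (AsSmall.down.obj j)))
    refine ⟨_, step, ?_⟩
    have hmap : (AsSmall.down ⋙ telescope).map step = h.r ≫ h.i :=
      Functor.ofSequence_map_homOfLE_succ _ _
    change h.r y = 0 at hy
    refine (ConcreteCategory.congr_hom hmap y).trans ?_
    change h.i (h.r y) = 0
    rw [hy, map_zero]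

namespace SatisfiesTwoOfThree

variable {R : Type u} [Ring R] {S : Set (ModuleCat.{u} R)} (hS : SatisfiesTwoOfThree R S)
  {M N P : Type u} [AddCommGroup M] [Module R M] [AddCommGroup N] [Module R N]
  [AddCommGroup P] [Module R P]
include hS

lemma mem_of_subsingleton (hR : ModuleCat.of R R ∈ S) [Subsingleton M] :
    ModuleCat.of R M ∈ S :=
  (hS (.of R R) (.of R R) (.of R M) LinearMap.id 0 Function.injective_id
    (fun _ => ⟨0, Subsingleton.elim _ _⟩)
    (fun _ => ⟨fun _ => ⟨_, rfl⟩, fun _ => Subsingleton.elim _ _⟩)).1 hR hR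

lemma mem_of_linearEquiv (hR : ModuleCat.of R R ∈ S) (e : M ≃ₗ[R] N)
    (hM : ModuleCat.of R M ∈ S) : ModuleCat.of R N ∈ S :=
  (hS (.of R M) (.of R N) (.of R PUnit) e.toLinearMap 0 e.injective
    (fun _ => ⟨0, Subsingleton.elim _ _⟩)
    (fun y => ⟨fun _ => ⟨e.symm y, e.apply_symm_apply y⟩, fun _ => Subsingleton.elim _ _⟩)).2.1
    hM (hS.mem_of_subsingleton hR)

lemma prod_mem (hM : ModuleCat.of R M ∈ S) (hN : ModuleCat.of R N ∈ S) :
    ModuleCat.of R (M × N) ∈ S :=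
  (hS (.of R M) (.of R (M × N)) (.of R N) (LinearMap.inl R M N) (LinearMap.snd R M N)
    LinearMap.inl_injective LinearMap.snd_surjective Function.Exact.inl_snd).2.1 hM hN

lemma pi_fin_mem (hR : ModuleCat.of R R ∈ S) (n : ℕ) : ModuleCat.of R (Fin n → R) ∈ S := by
  induction n with
  | zero => exact hS.mem_of_subsingleton hR
  | succ n ih =>
    exact hS.mem_of_linearEquiv hR (Fin.consLinearEquiv R fun _ => R) (hS.prod_mem hR ih)

lemma range_mem_of_exact {f : M →ₗ[R] N} {g : N →ₗ[R] P} (hfg : Function.Exact f g)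
    (hf : ModuleCat.of R (LinearMap.range f) ∈ S) (hN : ModuleCat.of R N ∈ S) :
    ModuleCat.of R (LinearMap.range g) ∈ S :=
  (hS (.of R (LinearMap.range f)) (.of R N) (.of R (LinearMap.range g)) (LinearMap.range f).subtype
    g.rangeRestrict (Submodule.injective_subtype _) g.surjective_rangeRestrict
    (by rw [LinearMap.exact_iff, LinearMap.ker_rangeRestrict, Submodule.range_subtype,
      hfg.linearMap_ker_eq])).1 hf hN

end SatisfiesTwoOfThree

lemma StableUnderFilteredColimits.mem_of_forall_fg {R : Type u} [Ring R]
    {S : Set (ModuleCat.{u} R)} (hS : StableUnderFilteredColimits R S)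
    {M : Type u} [AddCommGroup M] [Module R M]
    (h : ∀ N : Submodule R M, N.FG → ModuleCat.of R N ∈ S) : ModuleCat.of R M ∈ S :=
  hS _ inferInstance inferInstance _ _
    (Submodule.isColimitDirectedCocone
      ⟨fun s : Finset M => Submodule.span R s, fun _ _ hst => Submodule.span_mono hst⟩
      fun x => ⟨{x}, Submodule.subset_span (by simp)⟩)
    fun s => h _ ⟨s, rfl⟩

namespace IsExactClass

variable {R : Type u} [Ring R] {S : Set (ModuleCat.{u} R)} (hS : IsExactClass R S)
  (hR : ModuleCat.of R R ∈ S)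
include hS hR

lemma finsupp_mem (ι : Type u) : ModuleCat.of R (ι →₀ R) ∈ S :=
  hS.1 _ inferInstance inferInstance _ _
    (Submodule.isColimitDirectedCocone
      ⟨fun s : Finset ι => Finsupp.supported R R s, fun _ _ hst => Finsupp.supported_mono hst⟩
      fun x => ⟨x.support, (Finsupp.mem_supported R x).2 subset_rfl⟩)
    fun s => hS.2.mem_of_linearEquiv hR
      ((LinearEquiv.funCongrLeft R R s.equivFin ≪≫ₗ
        (Finsupp.linearEquivFunOnFinite R R s).symm) ≪≫ₗ (Finsupp.supportedEquivFinsupp _).symm)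
      (hS.2.pi_fin_mem hR _)

lemma mem_of_projective (P : Type u) [AddCommGroup P] [Module R P] [Module.Projective R P] :
    ModuleCat.of R P ∈ S := by
  obtain ⟨s, hs⟩ := Module.projective_def'.1 ‹Module.Projective R P›
  exact hS.1.mem_of_retract
    ⟨ModuleCat.ofHom s, ModuleCat.ofHom (Finsupp.linearCombination R id),
      ModuleCat.hom_ext hs⟩
    (hS.finsupp_mem hR P)

lemma mem_of_projectiveResolution {M : ModuleCat.{u} R} (P : ProjectiveResolution M) {n : ℕ}
    (hn : Subsingleton (P.complex.X n)) : M ∈ S := by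
  have hP (i : ℕ) : ModuleCat.of R (P.complex.X i) ∈ S :=
    have := (IsProjective.iff_projective (R := R) (P.complex.X i)).2 (P.projective i)
    hS.mem_of_projective hR _
  let B (i : ℕ) := LinearMap.range (P.complex.d (i + 1) i).hom
  have hB : ModuleCat.of R (B 0) ∈ S := by
    refine Nat.decreasingInduction (n := n) (motive := fun i _ => ModuleCat.of R (B i) ∈ S)
      (fun i _ hi => ?_) (hS.2.mem_of_subsingleton hR) (Nat.zero_le n)
    exact hS.2.range_mem_of_exact
      ((ShortComplex.ShortExact.moduleCat_exact_iff_function_exact _).1 (P.exact_succ i)) hi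
      (hP (i + 1))
  have hπ : Function.Surjective (P.π.f 0).hom :=
    (ModuleCat.epi_iff_surjective _).1 inferInstance
  exact hS.2.mem_of_linearEquiv hR (LinearEquiv.ofTop _ (LinearMap.range_eq_top.2 hπ))
    (hS.2.range_mem_of_exact
      ((ShortComplex.ShortExact.moduleCat_exact_iff_function_exact _).1 P.exact₀) hB (hP 0))

lemma mem_of_finite
    (hfp : ∀ M : ModuleCat.{u} R, Module.FinitePresentation R M → M ∈ S)
    (M : Type u) [AddCommGroup M] [Module R M] [Module.Finite R M] : ModuleCat.of R M ∈ S := by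
  obtain ⟨n, φ, hφ⟩ := Module.Finite.exists_fin' R M
  have hfg (L : Submodule R (Fin n → R)) (hL : L.FG) : ModuleCat.of R L ∈ S :=
    (hS.2 (.of R L) (.of R (Fin n → R)) (.of R (_ ⧸ L)) L.subtype L.mkQ L.injective_subtype
      L.mkQ_surjective (LinearMap.exact_subtype_mkQ L)).2.2 (hS.2.pi_fin_mem hR n)
      (hfp _ (Module.finitePresentation_of_surjective L.mkQ L.mkQ_surjective
        (by rwa [Submodule.ker_mkQ])))
  have hK : ModuleCat.of R (LinearMap.ker φ) ∈ S :=
    hS.1.mem_of_forall_fg fun L hL => hS.2.mem_of_linearEquiv hR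
      (L.equivMapOfInjective _ (LinearMap.ker φ).injective_subtype).symm (hfg _ (hL.map _))
  exact (hS.2 (.of R (LinearMap.ker φ)) (.of R (Fin n → R)) (.of R M) (LinearMap.ker φ).subtype φ
    (LinearMap.ker φ).injective_subtype hφ (LinearMap.exact_subtype_ker_map φ)).1 hK
    (hS.2.pi_fin_mem hR n)

end IsExactClass

/-- if every finitely presented `R`-module has finite projective
(homological) dimension, then `R` is regular in the sense of Vogel. -/
theorem isVogelRegular_of_finitePresented_finite_projective_dimension
    (R : Type u) [Ring R]
    (h : ∀ M : ModuleCat.{u} R, Module.FinitePresentation R M →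
      HasFiniteProjectiveResolution R M) :
    IsVogelRegular R := by
  intro M S hS hR
  have hfp (N : ModuleCat.{u} R) (hN : Module.FinitePresentation R N) : N ∈ S :=
    have ⟨P, n, hn⟩ := h N hN
    hS.mem_of_projectiveResolution hR P (hn n le_rfl)
  exact hS.1.mem_of_forall_fg fun N hN =>
    have := Module.Finite.iff_fg.2 hN
    hS.mem_of_finite hR hfp N
end

section
/- Let A be a right regular ring (in the sense of Vogel). Then the polynomial ring A[t] is right regular too. -/
universe u

open CategoryTheory CategoryTheory.Limits

/-!
The functor `M ↦ M[X] = R[X] ⊗_R M` from `R`-modules to `R[X]`-modules is exact (coefficientwise),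
preserves colimits (it is left adjoint to restriction of scalars) and sends `R` to `R[X]`. Hence the
`R`-modules `M` with `M[X] ∈ S` form an exact class containing `R`, for any exact class `S` of
`R[X]`-modules containing `R[X]`; if `R` is regular, `M[X] ∈ S` for every `R`-module `M`. For an
`R[X]`-module `M` the characteristic sequence `0 → M[X] → M[X] → M → 0`, whose first map is
`X ⊗ 1 - 1 ⊗ X` and whose second is evaluation, is exact, so `M ∈ S` by the 2/3 axiom. Right
regularity of `A[X]` is regularity of `A[X]ᵐᵒᵖ ≃ Aᵐᵒᵖ[X]`.
-/

open Polynomial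

noncomputable section

section PolynomialModules

variable {R M N : Type*} [Ring R] [AddCommGroup M] [AddCommGroup N] [Module R[X] N]

def Polynomial.linearMapOfCommute [Module R[X] M] (φ : M →+ N)
    (hC : ∀ (a : R) x, φ (C a • x) = C a • φ x)
    (hX : ∀ x, φ ((X : R[X]) • x) = (X : R[X]) • φ x) : M →ₗ[R[X]] N where
  __ := φ
  map_smul' p x := by
    show φ (p • x) = p • φ x
    have hXpow : ∀ (n : ℕ) x, φ ((X ^ n : R[X]) • x) = (X ^ n : R[X]) • φ x := by
      intro n
      induction n with
      | zero => simp
      | succ n ih => intro x; rw [pow_succ, mul_smul, ih, hX, ← mul_smul, ← pow_succ]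
    induction p using Polynomial.induction_on' with
    | add p q hp hq => rw [add_smul, map_add, hp, hq, add_smul]
    | monomial n a => rw [← C_mul_X_pow_eq_monomial, mul_smul, mul_smul, hC, hXpow]

lemma Polynomial.smul_eq_C_smul [Module R M] [Module R[X] M] [IsScalarTower R R[X] M]
    (a : R) (x : M) : a • x = (C a : R[X]) • x := by
  rw [← smul_one_smul R[X] a x, smul_eq_C_mul, mul_one]

variable (R N) in
def Polynomial.smulXEnd : N →ₗ[R[X]] N where
  toFun x := (X : R[X]) • x
  map_add' := smul_add _
  map_smul' p x := by simp only [smul_smul, X_mul, RingHom.id_apply]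

variable (R M) in
def Polynomial.smulXLinear [Module R M] [Module R[X] M] [IsScalarTower R R[X] M] :
    M →ₗ[R] M where
  toFun x := (X : R[X]) • x
  map_add' := smul_add _
  map_smul' a x := by simp only [smul_eq_C_smul a, smul_smul, X_mul_C, RingHom.id_apply]

end PolynomialModules

lemma Finsupp.eq_zero_of_mapDomain_succ_eq_mapRange {M : Type*} [AddCommMonoid M] {g : M → M}
    (hg : g 0 = 0) {v : ℕ →₀ M} (h : mapDomain (· + 1) v = mapRange g hg v) : v = 0 := by
  by_contra hv
  set d := v.support.max' (support_nonempty_iff.2 hv)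
  have hd : v d ≠ 0 := mem_support_iff.1 (v.support.max'_mem _)
  have hd1 : v (d + 1) = 0 := notMem_support_iff.1 fun hmem => by
    have := v.support.le_max' _ hmem
    omega
  have := DFunLike.congr_fun h (d + 1)
  rw [mapDomain_apply (add_left_injective 1), mapRange_apply, hd1, hg] at this
  exact hd this

/-- The induced module `M[X] = R[X] ⊗_R M`, modelled as `ℕ →₀ M` with `C a` acting
coefficientwise and `X` by shifting. (Mathlib's `PolynomialModule` needs `R` commutative.) -/
def PolyMod (R M : Type*) [Ring R] [AddCommGroup M] [Module R M] : Type _ := ℕ →₀ M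

namespace PolyMod

section Basic

variable (R M : Type*) [Ring R] [AddCommGroup M] [Module R M]

instance : AddCommGroup (PolyMod R M) := inferInstanceAs (AddCommGroup (ℕ →₀ M))

instance : Module R (PolyMod R M) := inferInstanceAs (Module R (ℕ →₀ M))

def shift : PolyMod R M →ₗ[R] PolyMod R M := Finsupp.lmapDomain M R (· + 1)

def action : R[X] →+* AddMonoid.End (PolyMod R M) :=
  eval₂RingHom' (Module.toAddMonoidEnd R (PolyMod R M)) (shift R M).toAddMonoidHom
    fun a => AddMonoidHom.ext fun v => ((shift R M).map_smul a v).symm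

instance : Module R[X] (PolyMod R M) := Module.compHom _ (action R M)

variable {R M}

lemma C_smul (a : R) (v : PolyMod R M) : (C a : R[X]) • v = a • v := by
  show action R M (C a) v = _
  rw [show action R M (C a) = _ from eval₂_C _ _]
  rfl

lemma X_smul (v : PolyMod R M) : (X : R[X]) • v = shift R M v := by
  show action R M X v = _
  rw [show action R M X = _ from eval₂_X _ _]
  rfl

def single (n : ℕ) : M →ₗ[R] PolyMod R M := Finsupp.lsingle n

lemma X_pow_smul_single (k n : ℕ) (m : M) :
    (X ^ k : R[X]) • (single n m : PolyMod R M) = single (n + k) m := by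
  induction k with
  | zero => simp
  | succ k ih =>
    rw [pow_succ', mul_smul, ih, X_smul]
    exact Finsupp.mapDomain_single

lemma X_smul_single (n : ℕ) (m : M) :
    (X : R[X]) • (single n m : PolyMod R M) = single (n + 1) m := by
  rw [← pow_one (X : R[X]), X_pow_smul_single]

lemma C_smul_single (a : R) (n : ℕ) (m : M) :
    (C a : R[X]) • (single n m : PolyMod R M) = single n (a • m) := by
  rw [C_smul, map_smul]

lemma induction_linear {p : PolyMod R M → Prop} (v : PolyMod R M) (zero : p 0)
    (add : ∀ v w, p v → p w → p (v + w)) (single : ∀ n m, p (single n m : PolyMod R M)) : p v :=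
  Finsupp.induction_linear v zero add single

lemma hom_ext {N : Type*} [AddCommGroup N] [Module R[X] N] {f g : PolyMod R M →ₗ[R[X]] N}
    (h : ∀ n (m : M), f (single n m) = g (single n m)) : f = g := by
  ext v
  induction v using induction_linear with
  | zero => simp
  | add v w hv hw => rw [map_add, map_add, hv, hw]
  | single n m => exact h n m

end Basic

section Map

variable {R M N P : Type*} [Ring R] [AddCommGroup M] [Module R M] [AddCommGroup N] [Module R N]
  [AddCommGroup P] [Module R P]

def map (f : M →ₗ[R] N) : PolyMod R M →ₗ[R[X]] PolyMod R N :=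
  linearMapOfCommute (Finsupp.mapRange.linearMap f).toAddMonoidHom
    (fun a v => by rw [C_smul, C_smul]; exact map_smul (Finsupp.mapRange.linearMap f) a v)
    (fun v => by
      rw [X_smul, X_smul]
      exact (Finsupp.mapDomain_mapRange _ (v : ℕ →₀ M) f f.map_zero f.map_add).symm)

@[simp]
lemma map_single (f : M →ₗ[R] N) (n : ℕ) (m : M) :
    map f (single n m : PolyMod R M) = single n (f m) :=
  Finsupp.mapRange_single (hf := f.map_zero)

lemma map_injective {f : M →ₗ[R] N} (hf : Function.Injective f) :
    Function.Injective (map f (R := R)) :=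
  Finsupp.mapRange_injective f f.map_zero hf

lemma map_surjective {f : M →ₗ[R] N} (hf : Function.Surjective f) :
    Function.Surjective (map f (R := R)) :=
  Finsupp.mapRange_surjective f f.map_zero hf

lemma map_exact {f : M →ₗ[R] N} {g : N →ₗ[R] P} (hf : Function.Injective f)
    (hfg : Function.Exact f g) : Function.Exact (map f (R := R)) (map g) := by
  have : Function.Exact (Finsupp.mapRange.linearMap (α := ℕ) f)
      (Finsupp.mapRange.linearMap g) := by
    rw [LinearMap.exact_iff, Finsupp.ker_mapRange,
      Finsupp.range_mapRange_linearMap f (LinearMap.ker_eq_bot.2 hf), hfg.linearMap_ker_eq]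
  exact this

end Map

section Lift

variable {R M N : Type*} [Ring R] [AddCommGroup M] [Module R M] [AddCommGroup N] [Module R[X] N]

def liftAddHom (h : M →+ N) : PolyMod R M →+ N :=
  Finsupp.liftAddHom fun n => (DistribSMul.toAddMonoidHom N (X ^ n : R[X])).comp h

lemma liftAddHom_single (h : M →+ N) (n : ℕ) (m : M) :
    liftAddHom h (single n m : PolyMod R M) = (X ^ n : R[X]) • h m :=
  Finsupp.liftAddHom_apply_single _ n m

def lift (h : M →+ N) (hh : ∀ (a : R) m, h (a • m) = C a • h m) : PolyMod R M →ₗ[R[X]] N :=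
  linearMapOfCommute (liftAddHom h)
    (fun a v => by
      induction v using induction_linear with
      | zero => simp
      | add v w hv hw => rw [smul_add, map_add, map_add, hv, hw, smul_add]
      | single n m =>
        rw [C_smul_single, liftAddHom_single, liftAddHom_single, hh, smul_smul, smul_smul,
          X_pow_mul])
    (fun v => by
      induction v using induction_linear with
      | zero => simp
      | add v w hv hw => rw [smul_add, map_add, map_add, hv, hw, smul_add]
      | single n m =>
        rw [X_smul_single, liftAddHom_single, liftAddHom_single, pow_succ', mul_smul])

@[simp]
lemma lift_single (h : M →+ N) (hh : ∀ (a : R) m, h (a • m) = C a • h m) (n : ℕ) (m : M) :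
    lift h hh (single n m) = (X ^ n : R[X]) • h m :=
  liftAddHom_single h n m

end Lift

section Functor

variable (R : Type u) [Ring R]

def functor : ModuleCat.{u} R ⥤ ModuleCat.{u} R[X] where
  obj M := ModuleCat.of R[X] (PolyMod R M)
  map f := ModuleCat.ofHom (map f.hom)
  map_id M := ModuleCat.hom_ext <| hom_ext fun n m => map_single _ n m
  map_comp f g := ModuleCat.hom_ext <| hom_ext fun n m => by simp

variable {R} {M : ModuleCat.{u} R} {N : ModuleCat.{u} R[X]}

def liftHom (g : M ⟶ (ModuleCat.restrictScalars C).obj N) : (functor R).obj M ⟶ N :=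
  ModuleCat.ofHom (lift g.hom.toAddMonoidHom (map_smul g.hom))

lemma liftHom_single (g : M ⟶ (ModuleCat.restrictScalars C).obj N) (n : ℕ) (m : M) :
    (liftHom g).hom (single n m : PolyMod R M) = (X ^ n : R[X]) • g.hom m :=
  lift_single _ (map_smul g.hom) n m

def restrictHom (g : (functor R).obj M ⟶ N) : M ⟶ (ModuleCat.restrictScalars C).obj N :=
  ModuleCat.ofHom (Y := (ModuleCat.restrictScalars C).obj N)
    { toFun m := g.hom (single 0 m : PolyMod R M)
      map_add' m m' := (congrArg g.hom (map_add _ m m')).trans (map_add g.hom _ _)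
      map_smul' a m := (congrArg g.hom (C_smul_single a 0 m).symm).trans (map_smul g.hom _ _) }

variable (R) in
def adjunction : functor R ⊣ ModuleCat.restrictScalars (C : R →+* R[X]) :=
  Adjunction.mkOfHomEquiv
    { homEquiv M N :=
        { toFun := restrictHom
          invFun := liftHom
          left_inv g := ModuleCat.hom_ext <| hom_ext fun n m => by
            show (liftHom (restrictHom g)).hom (single n m : PolyMod R M) = _
            rw [liftHom_single]
            refine (map_smul g.hom _ _).symm.trans (congrArg g.hom ?_)
            exact (X_pow_smul_single n 0 m).trans (by rw [zero_add])
          right_inv g := ModuleCat.hom_ext <| LinearMap.ext fun m => by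
            show (liftHom g).hom (single 0 m : PolyMod R M) = _
            rw [liftHom_single, pow_zero, one_smul] }
      homEquiv_naturality_left_symm f g := ModuleCat.hom_ext <| hom_ext fun n m => by
        show (liftHom (f ≫ g)).hom (single n m : PolyMod R _)
          = (liftHom g).hom (map f.hom (single n m))
        rw [map_single, liftHom_single, liftHom_single]
        rfl
      homEquiv_naturality_right f g := rfl }

instance : PreservesColimits (functor R) := (adjunction R).leftAdjoint_preservesColimits

variable (R) in
def selfEquiv : PolyMod R R ≃ₗ[R[X]] R[X] :=
  LinearEquiv.ofLinearMap (lift (C : R →+* R[X]).toAddMonoidHom (map_mul C))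
    (LinearMap.toSpanSingleton R[X] (PolyMod R R) (single 0 1))
    (LinearMap.ext_ring <| by simp)
    (hom_ext fun n a => by
      simp only [LinearMap.comp_apply, LinearMap.toSpanSingleton_apply, LinearMap.id_apply]
      rw [lift_single, smul_eq_mul, mul_smul]
      simp [C_smul_single, X_pow_smul_single])

end Functor

section CharacteristicSequence

variable {R M : Type*} [Ring R] [AddCommGroup M] [Module R M] [Module R[X] M]
  [IsScalarTower R R[X] M]

variable (R M) in
/-- `X ⊗ 1 - 1 ⊗ X` on `R[X] ⊗_R M`. -/
def charMap : PolyMod R M →ₗ[R[X]] PolyMod R M := smulXEnd R _ - map (smulXLinear R M)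

variable (R M) in
def evalMap : PolyMod R M →ₗ[R[X]] M := lift (AddMonoidHom.id M) smul_eq_C_smul

lemma charMap_single (n : ℕ) (m : M) :
    charMap R M (single n m) = single (n + 1) m - single n ((X : R[X]) • m) :=
  congrArg₂ (· - ·) (X_smul_single n m) (map_single _ n m)

lemma evalMap_single (n : ℕ) (m : M) : evalMap R M (single n m) = (X ^ n : R[X]) • m :=
  lift_single _ _ n m

lemma evalMap_surjective : Function.Surjective (evalMap R M) := fun m =>
  ⟨single 0 m, by rw [evalMap_single, pow_zero, one_smul]⟩

lemma charMap_injective : Function.Injective (charMap R M) := by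
  refine (injective_iff_map_eq_zero _).2 fun v hv => ?_
  refine Finsupp.eq_zero_of_mapDomain_succ_eq_mapRange (smul_zero (X : R[X])) ?_
  rw [charMap, LinearMap.sub_apply, sub_eq_zero] at hv
  exact (X_smul v).symm.trans hv

lemma evalMap_comp_charMap : evalMap R M ∘ₗ charMap R M = 0 :=
  hom_ext fun n m => by
    rw [LinearMap.comp_apply, charMap_single, map_sub, evalMap_single, evalMap_single,
      LinearMap.zero_apply, pow_succ, mul_smul, sub_self]

lemma single_sub_single_zero_mem_range (n : ℕ) (m : M) :
    single n m - single 0 ((X ^ n : R[X]) • m) ∈ LinearMap.range (charMap R M) := by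
  induction n generalizing m with
  | zero => simp
  | succ n ih =>
    have := add_mem (LinearMap.mem_range_self (charMap R M) (single n m)) (ih ((X : R[X]) • m))
    rwa [charMap_single, sub_add_sub_cancel, ← mul_smul, ← pow_succ] at this

lemma sub_single_zero_evalMap_mem_range (v : PolyMod R M) :
    v - single 0 (evalMap R M v) ∈ LinearMap.range (charMap R M) := by
  induction v using induction_linear with
  | zero => simp
  | add v w hv hw =>
    rw [map_add, map_add, add_sub_add_comm]
    exact add_mem hv hw
  | single n m => rw [evalMap_single]; exact single_sub_single_zero_mem_range n m

lemma charMap_exact : Function.Exact (charMap R M) (evalMap R M) := by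
  refine LinearMap.exact_iff.2 (le_antisymm (fun v hv => ?_) ?_)
  · simpa [LinearMap.mem_ker.1 hv] using sub_single_zero_evalMap_mem_range v
  · rw [LinearMap.range_le_ker_iff]
    exact evalMap_comp_charMap

end CharacteristicSequence

end PolyMod

def PreservesShortExact {R S : Type u} [Ring R] [Ring S]
    (F : ModuleCat.{u} R ⥤ ModuleCat.{u} S) : Prop :=
  ∀ ⦃M N P : ModuleCat.{u} R⦄ (f : M ⟶ N) (g : N ⟶ P), Function.Injective f →
    Function.Surjective g → Function.Exact f g →
      Function.Injective (F.map f) ∧ Function.Surjective (F.map g) ∧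
        Function.Exact (F.map f) (F.map g)

lemma PolyMod.functor_preservesShortExact (R : Type u) [Ring R] :
    PreservesShortExact (PolyMod.functor R) := fun _ _ _ _ _ hf hg hfg =>
  ⟨PolyMod.map_injective hf, PolyMod.map_surjective hg, PolyMod.map_exact hf hfg⟩

lemma ModuleCat.restrictScalars_preservesShortExact {R S : Type u} [Ring R] [Ring S]
    (f : R →+* S) : PreservesShortExact (ModuleCat.restrictScalars.{u} f) :=
  fun _ _ _ _ _ hf hg hfg => ⟨hf, hg, hfg⟩

namespace IsExactClass

variable {R : Type u} [Ring R] {S : Set (ModuleCat.{u} R)}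

lemma zero_mem (hS : IsExactClass R S) (hR : ModuleCat.of R R ∈ S) :
    ModuleCat.of R PUnit ∈ S :=
  (hS.2 _ _ (ModuleCat.of R PUnit) LinearMap.id 0 Function.injective_id
    (fun _ => ⟨0, Subsingleton.elim _ _⟩)
    (fun y => ⟨fun _ => ⟨y, rfl⟩, fun _ => Subsingleton.elim _ _⟩)).1 hR hR

lemma mem_of_iso (hS : IsExactClass R S) (hR : ModuleCat.of R R ∈ S) {M N : ModuleCat.{u} R}
    (e : M ≅ N) (hM : M ∈ S) : N ∈ S :=
  (hS.2 M N (ModuleCat.of R PUnit) e.toLinearEquiv.toLinearMap 0 e.toLinearEquiv.injective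
    (fun _ => ⟨0, Subsingleton.elim _ _⟩)
    (fun y => ⟨fun _ => e.toLinearEquiv.surjective y, fun _ => Subsingleton.elim _ _⟩)).2.1
    hM (hS.zero_mem hR)

lemma preimage {R' : Type u} [Ring R'] {T : Set (ModuleCat.{u} R')} (hT : IsExactClass R' T)
    (F : ModuleCat.{u} R ⥤ ModuleCat.{u} R') [PreservesFilteredColimits F]
    (hF : PreservesShortExact F) : IsExactClass R (F.obj ⁻¹' T) := by
  refine ⟨fun J _ hJ D c hc hD =>
    hT.1 J _ hJ (D ⋙ F) (F.mapCocone c) (isColimitOfPreserves F hc) hD,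
    fun M N P f g hf hg hfg => ?_⟩
  obtain ⟨hFf, hFg, hFfg⟩ := hF (ModuleCat.ofHom f) (ModuleCat.ofHom g) hf hg hfg
  exact hT.2 _ _ _ _ _ hFf hFg hFfg

end IsExactClass

lemma IsVogelRegular.functor_obj_mem {R R' : Type u} [Ring R] [Ring R'] (hR : IsVogelRegular R)
    (F : ModuleCat.{u} R ⥤ ModuleCat.{u} R') [PreservesFilteredColimits F]
    (hF : PreservesShortExact F) {T : Set (ModuleCat.{u} R')} (hT : IsExactClass R' T)
    (hRT : F.obj (ModuleCat.of R R) ∈ T) (M : ModuleCat.{u} R) : F.obj M ∈ T :=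
  hR M _ (hT.preimage F hF) hRT

theorem IsVogelRegular.of_ringEquiv {R R' : Type u} [Ring R] [Ring R'] (e : R ≃+* R')
    (hR : IsVogelRegular R) : IsVogelRegular R' := by
  intro M T hT hR'
  let E := ModuleCat.restrictScalarsEquivalenceOfRingEquiv e
  have hRT : E.inverse.obj (ModuleCat.of R R) ∈ T :=
    hT.mem_of_iso hR' (ModuleCat.restrictScalarsIsoOfEquiv e.symm).symm hR'
  exact hT.mem_of_iso hR' (E.unitIso.app M).symm
    (hR.functor_obj_mem E.inverse (ModuleCat.restrictScalars_preservesShortExact _) hT hRT _)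

theorem IsVogelRegular.polynomial {R : Type u} [Ring R] (hR : IsVogelRegular R) :
    IsVogelRegular R[X] := by
  intro M S hS hRX
  let _ : Module R M := Module.compHom M C
  have : IsScalarTower R R[X] M := ⟨fun a p x => by
    show (a • p) • x = C a • p • x
    rw [smul_eq_C_mul, mul_smul]⟩
  have hPoly : (PolyMod.functor R).obj (ModuleCat.of R M) ∈ S :=
    hR.functor_obj_mem _ (PolyMod.functor_preservesShortExact R) hS
      (hS.mem_of_iso hRX (PolyMod.selfEquiv R).toModuleIso.symm hRX) _
  exact (hS.2 _ _ M _ _ PolyMod.charMap_injective PolyMod.evalMap_surjective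
    PolyMod.charMap_exact).1 hPoly hPoly

end

/-- if `A` is a right regular ring (in the sense of Vogel), then the
polynomial ring `A[t]` is right regular too. -/
theorem isVogelRightRegular_polynomial
    (A : Type u) [Ring A] (hA : IsVogelRightRegular A) :
    IsVogelRightRegular (Polynomial A) :=
  hA.polynomial.of_ringEquiv (opRingEquiv A).symm
end
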